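/- Comparison estimate on a thin annulus: let ρ > 1, 0 < t < 1, c > 0. Let A and Ã be matrix-valued functions, each continuous on {ρ⁻¹t ≤ |z| ≤ ρ} and holomorphic on the interior, each with line integral of its norm over |z| = ρ at most c and over |z| = ρ⁻¹t at most c·t, and such that the line integral of ‖A − Ã‖ over |z| = ρ is at most c·t. Then there is a constant C depending only on c and ρ (and the matrix size) such that ‖A(z) − Ã(z)‖ ≤ C·t/|z| for all z with t ≤ |z| ≤ 1. -/

import Mathlib

/-!
On the annulus `r ≤ ‖w‖ ≤ R` the Cauchy integral formula reads
`2πi f(z) = ∮_{|w|=R} f(w)/(w - z) dw - ∮_{|w|=r} f(w)/(w - z) dw`, so `2π‖f z‖` is at most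
`∫_{|w|=R} ‖f‖ |dw| / (R - ‖z‖) + ∫_{|w|=r} ‖f‖ |dw| / (‖z‖ - r)`. Apply this to `f = A - B`
with `R = ρ`, `r = ρ⁻¹ t`: the outer integral is at most `c t` by hypothesis and the inner one at
most `2 c t` by the triangle inequality, while for `t ≤ ‖z‖ ≤ 1` the distances to the two circles
are at least `ρ - 1` and `(1 - ρ⁻¹) ‖z‖`.
-/

open Metric Set Complex Real

attribute [local instance] Matrix.linftyOpNormedAddCommGroup Matrix.linftyOpNormedRing
  Matrix.linftyOpNormedSpace

lemma setOf_le_norm_and_norm_le_eq {F : Type*} [SeminormedAddCommGroup F] (r R : ℝ) :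
    {z : F | r ≤ ‖z‖ ∧ ‖z‖ ≤ R} = closedBall 0 R \ ball 0 r := by
  ext; simp [and_comm]

lemma setOf_lt_norm_and_norm_lt_eq {F : Type*} [SeminormedAddCommGroup F] (r R : ℝ) :
    {z : F | r < ‖z‖ ∧ ‖z‖ < R} = ball 0 R \ closedBall 0 r := by
  ext; simp [and_comm]

lemma sphere_outer_subset_closedBall_sdiff_ball {X : Type*} [PseudoMetricSpace X] (c : X)
    {r R : ℝ} (hrR : r ≤ R) : sphere c R ⊆ closedBall c R \ ball c r := fun w hw =>
  ⟨sphere_subset_closedBall hw, by rw [mem_ball, mem_sphere.1 hw]; exact not_lt.2 hrR⟩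

lemma sphere_inner_subset_closedBall_sdiff_ball {X : Type*} [PseudoMetricSpace X] (c : X)
    {r R : ℝ} (hrR : r ≤ R) : sphere c r ⊆ closedBall c R \ ball c r := fun w hw =>
  ⟨closedBall_subset_closedBall hrR (sphere_subset_closedBall hw),
    by rw [mem_ball, mem_sphere.1 hw]; exact lt_irrefl r⟩

lemma circleIntegral_sub_inv_of_notMem_closedBall {c z : ℂ} {r : ℝ} (hr : 0 ≤ r)
    (hz : z ∉ closedBall c r) : ∮ w in C(c, r), (w - z)⁻¹ = 0 := by
  have hdiff : DifferentiableOn ℂ (fun w : ℂ => (w - z)⁻¹) {z}ᶜ := fun w hw =>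
    ((differentiableAt_id.sub_const z).inv (sub_ne_zero.2 hw)).differentiableWithinAt
  exact (hdiff.diffContOnCl_ball fun w hw h => hz (h ▸ hw)).circleIntegral_eq_zero hr

section Annulus

variable {E : Type*} [NormedAddCommGroup E]

noncomputable def circleNormIntegral (f : ℂ → E) (c : ℂ) (R : ℝ) : ℝ :=
  ∫ θ in (0 : ℝ)..2 * π, ‖f (circleMap c R θ)‖ * R

lemma circleNormIntegral_nonneg (f : ℂ → E) (c : ℂ) {R : ℝ} (hR : 0 ≤ R) :
    0 ≤ circleNormIntegral f c R :=
  intervalIntegral.integral_nonneg two_pi_pos.le fun _ _ => by positivity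

lemma intervalIntegrable_norm_circleMap_mul {f : ℂ → E} {c : ℂ} {R : ℝ} (hR : 0 ≤ R)
    (hf : ContinuousOn f (sphere c R)) (a b : ℝ) :
    IntervalIntegrable (fun θ => ‖f (circleMap c R θ)‖ * R) MeasureTheory.volume a b :=
  ((hf.comp_continuous (continuous_circleMap c R) (circleMap_mem_sphere c hR)).norm.mul
    continuous_const).intervalIntegrable a b

lemma circleNormIntegral_sub_le {f g : ℂ → E} {c : ℂ} {R : ℝ} (hR : 0 ≤ R)
    (hf : ContinuousOn f (sphere c R)) (hg : ContinuousOn g (sphere c R)) :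
    circleNormIntegral (f - g) c R ≤
      circleNormIntegral f c R + circleNormIntegral g c R := by
  rw [circleNormIntegral, circleNormIntegral, circleNormIntegral,
    ← intervalIntegral.integral_add (intervalIntegrable_norm_circleMap_mul hR hf _ _)
      (intervalIntegrable_norm_circleMap_mul hR hg _ _)]
  refine intervalIntegral.integral_mono_on two_pi_pos.le
    (intervalIntegrable_norm_circleMap_mul hR (hf.sub hg) _ _)
    ((intervalIntegrable_norm_circleMap_mul hR hf _ _).add
      (intervalIntegrable_norm_circleMap_mul hR hg _ _)) fun θ _ => ?_
  rw [← add_mul]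
  exact mul_le_mul_of_nonneg_right (norm_sub_le _ _) hR

variable [NormedSpace ℂ E]

lemma norm_circleIntegral_smul_le {f : ℂ → E} {g : ℂ → ℂ} {c : ℂ} {R M : ℝ} (hR : 0 ≤ R)
    (hf : ContinuousOn f (sphere c R)) (hg : ∀ w ∈ sphere c R, ‖g w‖ ≤ M) :
    ‖∮ w in C(c, R), g w • f w‖ ≤ M * circleNormIntegral f c R := by
  rw [circleNormIntegral, ← intervalIntegral.integral_const_mul]
  refine intervalIntegral.norm_integral_le_of_norm_le two_pi_pos.le
    (Filter.Eventually.of_forall fun θ _ => ?_)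
    ((intervalIntegrable_norm_circleMap_mul hR hf _ _).const_mul M)
  rw [deriv_circleMap, norm_smul, norm_smul, norm_mul, norm_circleMap_zero, Complex.norm_I,
    abs_of_nonneg hR, mul_one, mul_comm R, mul_assoc]
  gcongr
  exact hg _ (circleMap_mem_sphere c hR θ)

lemma norm_circleIntegral_sub_inv_smul_le {f : ℂ → E} {c z : ℂ} {R : ℝ} (hR : 0 ≤ R)
    (hz : ‖z - c‖ ≠ R) (hf : ContinuousOn f (sphere c R)) :
    ‖∮ w in C(c, R), (w - z)⁻¹ • f w‖ ≤ circleNormIntegral f c R / |R - ‖z - c‖| := by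
  rw [div_eq_inv_mul]
  refine norm_circleIntegral_smul_le hR hf fun w hw => ?_
  have hdist : |R - ‖z - c‖| ≤ ‖w - z‖ := by
    rw [mem_sphere_iff_norm] at hw
    calc |R - ‖z - c‖| = |‖w - c‖ - ‖z - c‖| := by rw [hw]
      _ ≤ ‖(w - c) - (z - c)‖ := abs_norm_sub_norm_le _ _
      _ = ‖w - z‖ := by rw [sub_sub_sub_cancel_right]
  rw [norm_inv]
  exact inv_anti₀ (abs_pos.2 (sub_ne_zero.2 hz.symm)) hdist

variable [CompleteSpace E]

lemma circleIntegral_dslope {f : ℂ → E} {c z : ℂ} {R : ℝ} (hR : 0 ≤ R) (hz : z ∉ sphere c R)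
    (hf : ContinuousOn f (sphere c R)) :
    ∮ w in C(c, R), dslope f z w =
      (∮ w in C(c, R), (w - z)⁻¹ • f w) - (∮ w in C(c, R), (w - z)⁻¹) • f z := by
  have hne : ∀ w ∈ sphere c R, w - z ≠ 0 := fun w hw => sub_ne_zero.2 (ne_of_mem_of_not_mem hw hz)
  have hinv : ContinuousOn (fun w : ℂ => (w - z)⁻¹) (sphere c R) :=
    (continuousOn_id.sub continuousOn_const).inv₀ hne
  have hslope : EqOn (dslope f z) (fun w => (w - z)⁻¹ • f w - (w - z)⁻¹ • f z) (sphere c R) :=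
    fun w hw => by
      rw [dslope_of_ne f (sub_ne_zero.1 (hne w hw)), slope_def_module, smul_sub]
  rw [circleIntegral.integral_congr hR hslope,
    circleIntegral.integral_sub (f := fun w => (w - z)⁻¹ • f w) (g := fun w => (w - z)⁻¹ • f z)
      ((hinv.smul hf).circleIntegrable hR)
      ((hinv.smul continuousOn_const).circleIntegrable hR),
    circleIntegral.integral_smul_const]

-- Goursat's theorem on the annulus for `dslope f z`, which is continuous at `z`.
theorem circleIntegral_sub_inv_smul_sub_of_differentiableOn_annulus {f : ℂ → E} {c z : ℂ}
    {r R : ℝ} (hr : 0 < r) (hz : z ∈ ball c R \ closedBall c r)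
    (hc : ContinuousOn f (closedBall c R \ ball c r))
    (hd : DifferentiableOn ℂ f (ball c R \ closedBall c r)) :
    (∮ w in C(c, R), (w - z)⁻¹ • f w) - (∮ w in C(c, r), (w - z)⁻¹ • f w) =
      (2 * π * I : ℂ) • f z := by
  have hrR : r ≤ R := ((lt_of_not_ge hz.2).trans hz.1).le
  have hopen : IsOpen (ball c R \ closedBall c r) := isOpen_ball.sdiff isClosed_closedBall
  have hnhds : closedBall c R \ ball c r ∈ nhds z :=
    Filter.mem_of_superset (hopen.mem_nhds hz)
      (sdiff_subset_sdiff ball_subset_closedBall ball_subset_closedBall)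
  have hgoursat := circleIntegral_eq_of_differentiable_on_annulus_off_countable hr hrR
    (countable_singleton z)
    ((continuousOn_dslope hnhds).2 ⟨hc, hd.differentiableAt (hopen.mem_nhds hz)⟩)
    fun w hw => (differentiableAt_dslope_of_ne hw.2).2 (hd.differentiableAt (hopen.mem_nhds hw.1))
  rw [circleIntegral_dslope (hr.trans_le hrR).le (fun h => hz.1.ne h)
      (hc.mono (sphere_outer_subset_closedBall_sdiff_ball c hrR)),
    circleIntegral_dslope hr.le (fun h => hz.2 (sphere_subset_closedBall h))
      (hc.mono (sphere_inner_subset_closedBall_sdiff_ball c hrR)),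
    circleIntegral.integral_sub_inv_of_mem_ball hz.1,
    circleIntegral_sub_inv_of_notMem_closedBall hr.le hz.2, zero_smul, sub_zero] at hgoursat
  rw [← hgoursat, sub_sub_cancel]

theorem two_pi_mul_norm_le_of_differentiableOn_annulus {f : ℂ → E} {c z : ℂ} {r R : ℝ}
    (hr : 0 < r) (hz : z ∈ ball c R \ closedBall c r)
    (hc : ContinuousOn f (closedBall c R \ ball c r))
    (hd : DifferentiableOn ℂ f (ball c R \ closedBall c r)) :
    2 * π * ‖f z‖ ≤
      circleNormIntegral f c R / (R - ‖z - c‖) + circleNormIntegral f c r / (‖z - c‖ - r) := by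
  have hzR : ‖z - c‖ < R := mem_ball_iff_norm.1 hz.1
  have hrz : r < ‖z - c‖ := lt_of_not_ge (mem_closedBall_iff_norm.not.1 hz.2)
  have hrR : r ≤ R := (hrz.trans hzR).le
  calc 2 * π * ‖f z‖ = ‖(2 * π * I : ℂ) • f z‖ := by simp [norm_smul, abs_of_pos pi_pos]
    _ = ‖(∮ w in C(c, R), (w - z)⁻¹ • f w) - ∮ w in C(c, r), (w - z)⁻¹ • f w‖ := by
      rw [circleIntegral_sub_inv_smul_sub_of_differentiableOn_annulus hr hz hc hd]
    _ ≤ circleNormIntegral f c R / |R - ‖z - c‖| + circleNormIntegral f c r / |r - ‖z - c‖| :=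
      (norm_sub_le _ _).trans (add_le_add
        (norm_circleIntegral_sub_inv_smul_le (hr.le.trans hrR) hzR.ne
          (hc.mono (sphere_outer_subset_closedBall_sdiff_ball c hrR)))
        (norm_circleIntegral_sub_inv_smul_le hr.le hrz.ne'
          (hc.mono (sphere_inner_subset_closedBall_sdiff_ball c hrR))))
    _ = _ := by rw [abs_of_pos (sub_pos.2 hzR), abs_sub_comm, abs_of_pos (sub_pos.2 hrz)]

end Annulus

lemma div_sub_add_div_sub_inv_mul_le {ρ t s a b K : ℝ} (hρ : 1 < ρ) (ht : 0 < t) (hts : t ≤ s)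
    (hs : s ≤ 1) (hK : 0 ≤ K) (ha : a ≤ K) (hb : b ≤ 2 * K) :
    a / (ρ - s) + b / (s - ρ⁻¹ * t) ≤ (1 + 2 * ρ) * K / ((ρ - 1) * s) := by
  have hρ0 : 0 < ρ := one_pos.trans hρ
  have hρ1 : 0 < ρ - 1 := sub_pos.2 hρ
  have hs0 : 0 < s := ht.trans_le hts
  calc a / (ρ - s) + b / (s - ρ⁻¹ * t)
      ≤ K / ((ρ - 1) * s) + 2 * K / ((ρ - 1) / ρ * s) := by
        gcongr ?_ + ?_
        · refine div_le_div₀ hK ha (mul_pos hρ1 hs0) ?_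
          nlinarith
        · refine div_le_div₀ (by positivity) hb (mul_pos (div_pos hρ1 hρ0) hs0) ?_
          calc (ρ - 1) / ρ * s = s - ρ⁻¹ * s := by field_simp
            _ ≤ s - ρ⁻¹ * t := by gcongr
    _ = (1 + 2 * ρ) * K / ((ρ - 1) * s) := by
        field_simp

theorem comparison_estimate_on_annulus_general (d : ℕ) (ρ c : ℝ) (hρ : 1 < ρ) :
    ∃ C : ℝ, ∀ t : ℝ, 0 < t → t < 1 →
      ∀ A B : ℂ → Matrix (Fin d) (Fin d) ℂ,
        ContinuousOn A {z : ℂ | ρ⁻¹ * t ≤ ‖z‖ ∧ ‖z‖ ≤ ρ} →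
        DifferentiableOn ℂ A
          {z : ℂ | ρ⁻¹ * t < ‖z‖ ∧ ‖z‖ < ρ} →
        ContinuousOn B {z : ℂ | ρ⁻¹ * t ≤ ‖z‖ ∧ ‖z‖ ≤ ρ} →
        DifferentiableOn ℂ B
          {z : ℂ | ρ⁻¹ * t < ‖z‖ ∧ ‖z‖ < ρ} →
        (∫ θ in (0:ℝ)..(2 * Real.pi),
            ‖A ((ρ : ℂ) * Complex.exp (θ * Complex.I))‖ * ρ) ≤ c →
        (∫ θ in (0:ℝ)..(2 * Real.pi),
            ‖A (((ρ⁻¹ * t : ℝ) : ℂ) * Complex.exp (θ * Complex.I))‖ * (ρ⁻¹ * t))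
          ≤ c * t →
        (∫ θ in (0:ℝ)..(2 * Real.pi),
            ‖B ((ρ : ℂ) * Complex.exp (θ * Complex.I))‖ * ρ) ≤ c →
        (∫ θ in (0:ℝ)..(2 * Real.pi),
            ‖B (((ρ⁻¹ * t : ℝ) : ℂ) * Complex.exp (θ * Complex.I))‖ * (ρ⁻¹ * t))
          ≤ c * t →
        (∫ θ in (0:ℝ)..(2 * Real.pi),
            ‖A ((ρ : ℂ) * Complex.exp (θ * Complex.I))
              - B ((ρ : ℂ) * Complex.exp (θ * Complex.I))‖ * ρ) ≤ c * t →
        ∀ z : ℂ, t ≤ ‖z‖ → ‖z‖ ≤ 1 →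
          ‖A z - B z‖ ≤ C * t / ‖z‖ := by
  refine ⟨(1 + 2 * ρ) * c / (2 * π * (ρ - 1)),
    fun t ht _ A B hAc hAd hBc hBd _ hAin _ hBin hAB z htz hz1 => ?_⟩
  set r := ρ⁻¹ * t
  rw [setOf_le_norm_and_norm_le_eq] at hAc hBc
  rw [setOf_lt_norm_and_norm_lt_eq] at hAd hBd
  have hr : 0 < r := by positivity
  have hrz : r < ‖z‖ := (mul_lt_of_lt_one_left ht (inv_lt_one_of_one_lt₀ hρ)).trans_le htz
  have hz : z ∈ ball 0 ρ \ closedBall 0 r := by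
    simp only [mem_sdiff, mem_ball_zero_iff, mem_closedBall_zero_iff, not_le]
    exact ⟨hz1.trans_lt hρ, hrz⟩
  have hrρ : r ≤ ρ := (hrz.trans (hz1.trans_lt hρ)).le
  have hout : circleNormIntegral (A - B) 0 ρ ≤ c * t := by
    simpa only [circleNormIntegral, circleMap_zero, Pi.sub_apply] using hAB
  have hin : circleNormIntegral (A - B) 0 r ≤ 2 * (c * t) := by
    refine (circleNormIntegral_sub_le hr.le
      (hAc.mono (sphere_inner_subset_closedBall_sdiff_ball 0 hrρ))
      (hBc.mono (sphere_inner_subset_closedBall_sdiff_ball 0 hrρ))).trans ?_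
    simp only [circleNormIntegral, circleMap_zero]
    linarith
  have hct : 0 ≤ c * t := (circleNormIntegral_nonneg _ 0 (hr.le.trans hrρ)).trans hout
  have hest := two_pi_mul_norm_le_of_differentiableOn_annulus hr hz (hAc.sub hBc)
    (hAd.sub hBd)
  rw [sub_zero] at hest
  refine le_of_mul_le_mul_left (hest.trans ?_) two_pi_pos
  refine (div_sub_add_div_sub_inv_mul_le hρ ht htz hz1 hct hout hin).trans_eq ?_
  field_simp

/-- comparison Cauchy estimate on the thin annulus
`ρ⁻¹ t ≤ |z| ≤ ρ`: if two holomorphic matrix-valued maps are close on the outer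
circle and small on the inner circle, then `‖A z - Ã z‖ ≤ C t / |z|`. -/
theorem comparison_estimate_on_annulus (d : ℕ) (ρ c : ℝ) (hρ : 1 < ρ) (hc : 0 < c) :
    ∃ C : ℝ, ∀ t : ℝ, 0 < t → t < 1 →
      ∀ A B : ℂ → Matrix (Fin d) (Fin d) ℂ,
        ContinuousOn A {z : ℂ | ρ⁻¹ * t ≤ ‖z‖ ∧ ‖z‖ ≤ ρ} →
        DifferentiableOn ℂ A
          {z : ℂ | ρ⁻¹ * t < ‖z‖ ∧ ‖z‖ < ρ} →
        ContinuousOn B {z : ℂ | ρ⁻¹ * t ≤ ‖z‖ ∧ ‖z‖ ≤ ρ} →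
        DifferentiableOn ℂ B
          {z : ℂ | ρ⁻¹ * t < ‖z‖ ∧ ‖z‖ < ρ} →
        (∫ θ in (0:ℝ)..(2 * Real.pi),
            ‖A ((ρ : ℂ) * Complex.exp (θ * Complex.I))‖ * ρ) ≤ c →
        (∫ θ in (0:ℝ)..(2 * Real.pi),
            ‖A (((ρ⁻¹ * t : ℝ) : ℂ) * Complex.exp (θ * Complex.I))‖ * (ρ⁻¹ * t))
          ≤ c * t →
        (∫ θ in (0:ℝ)..(2 * Real.pi),
            ‖B ((ρ : ℂ) * Complex.exp (θ * Complex.I))‖ * ρ) ≤ c →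
        (∫ θ in (0:ℝ)..(2 * Real.pi),
            ‖B (((ρ⁻¹ * t : ℝ) : ℂ) * Complex.exp (θ * Complex.I))‖ * (ρ⁻¹ * t))
          ≤ c * t →
        (∫ θ in (0:ℝ)..(2 * Real.pi),
            ‖A ((ρ : ℂ) * Complex.exp (θ * Complex.I))
              - B ((ρ : ℂ) * Complex.exp (θ * Complex.I))‖ * ρ) ≤ c * t →
        ∀ z : ℂ, t ≤ ‖z‖ → ‖z‖ ≤ 1 →
          ‖A z - B z‖ ≤ C * t / ‖z‖ :=
  comparison_estimate_on_annulus_general d ρ c hρ
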